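/- The vector h9=(1,1,0,1,-1) cannot be written as a sum u+v of two nonzero elements u,v of the semigroup S = Cone(h1,...,h8) ∩ Z^5; that is, h9 is an irreducible (Hilbert basis) element of S. -/

import Mathlib

open Matrix BigOperators

/-- The nine lattice vectors h1,...,h9 in ℤ^5 (indexed 0,...,8). -/
def hv : Fin 9 → Fin 5 → ℤ :=
  ![![1,0,0,0,0], ![0,1,0,0,0], ![0,0,1,0,0], ![0,0,0,1,0], ![0,0,0,0,1],
    ![2,2,-1,1,-2], ![1,2,-1,1,-1], ![1,2,0,0,-1], ![1,1,0,1,-1]]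

/-- Coordinatewise cast of an integer vector to a real vector. -/
def toR (u : Fin 5 → ℤ) : Fin 5 → ℝ := fun i => (u i : ℝ)

/-- The cone of nonnegative real combinations of a finite family of vectors in ℝ^5. -/
def coneOf {k : ℕ} (v : Fin k → Fin 5 → ℝ) : Set (Fin 5 → ℝ) :=
  {x | ∃ c : Fin k → ℝ, (∀ i, 0 ≤ c i) ∧ x = ∑ i, c i • v i}

/-- The cone ω generated by h1,...,h8 in ℝ^5. -/
def ω : Set (Fin 5 → ℝ) := coneOf (fun i : Fin 8 => toR (hv i.castSucc))

/-!
Five integral linear forms, x₀, x₀ + x₄, x₁ + x₄, x₁ + 2x₂ and x₁ + 2x₃ + 2x₄, are nonnegative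
on h1,...,h8 and hence on ω. Their values on h9 are 1, 0, 0, 1, 1. If h9 = u + v with u, v ∈ S,
the values on u and v are nonnegative integers adding up to these, so x₀ + x₄ and x₁ + x₄ vanish
on u and v. One of u, v, say u, has u₀ = 0; then u₁ = u₄ = 0, so u₁ + 2u₂ = 2u₂ and
u₁ + 2u₃ + 2u₄ = 2u₃ are even numbers in {0, 1}, and u = 0.
-/

lemma dotProduct_nonneg_of_mem_coneOf {k : ℕ} {v : Fin k → Fin 5 → ℝ} {w x : Fin 5 → ℝ}
    (hw : ∀ i, 0 ≤ w ⬝ᵥ v i) (hx : x ∈ coneOf v) : 0 ≤ w ⬝ᵥ x := by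
  obtain ⟨c, hc, rfl⟩ := hx
  rw [dotProduct_sum]
  refine Finset.sum_nonneg fun i _ => ?_
  rw [dotProduct_smul, smul_eq_mul]
  exact mul_nonneg (hc i) (hw i)

lemma dotProduct_nonneg_of_toR_mem_coneOf {k : ℕ} {g : Fin k → Fin 5 → ℤ} {w u : Fin 5 → ℤ}
    (hw : ∀ i, 0 ≤ w ⬝ᵥ g i) (hu : toR u ∈ coneOf fun i => toR (g i)) : 0 ≤ w ⬝ᵥ u := by
  have hcast (a b : Fin 5 → ℤ) : ((a ⬝ᵥ b : ℤ) : ℝ) = toR a ⬝ᵥ toR b :=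
    RingHom.map_dotProduct (Int.castRingHom ℝ) a b
  have hwR : ∀ i, 0 ≤ toR w ⬝ᵥ toR (g i) := fun i => by
    rw [← hcast]
    exact_mod_cast hw i
  exact_mod_cast hcast w u ▸ dotProduct_nonneg_of_mem_coneOf hwR hu

def ωDualVectors : Fin 5 → Fin 5 → ℤ :=
  ![![1,0,0,0,0], ![1,0,0,0,1], ![0,1,0,0,1], ![0,1,2,0,0], ![0,1,0,2,2]]

lemma ωDualVectors_dotProduct_hv_nonneg (j : Fin 5) (i : Fin 8) :
    0 ≤ ωDualVectors j ⬝ᵥ hv i.castSucc := by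
  revert j i
  decide

lemma ωDualVectors_dotProduct_nonneg {u : Fin 5 → ℤ} (hu : toR u ∈ ω) (j : Fin 5) :
    0 ≤ ωDualVectors j ⬝ᵥ u :=
  dotProduct_nonneg_of_toR_mem_coneOf (ωDualVectors_dotProduct_hv_nonneg j) hu

lemma eq_zero_or_eq_zero_of_add_eq_hv_eight {u v : Fin 5 → ℤ}
    (hu : ∀ j, 0 ≤ ωDualVectors j ⬝ᵥ u) (hv' : ∀ j, 0 ≤ ωDualVectors j ⬝ᵥ v)
    (h : u + v = hv 8) : u = 0 ∨ v = 0 := by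
  obtain ⟨h0, h1, h2, h3, h4⟩ : u 0 + v 0 = 1 ∧ u 1 + v 1 = 1 ∧ u 2 + v 2 = 0 ∧
      u 3 + v 3 = 1 ∧ u 4 + v 4 = -1 :=
    ⟨congrFun h 0, congrFun h 1, congrFun h 2, congrFun h 3, congrFun h 4⟩
  simp only [ωDualVectors, dotProduct, Fin.sum_univ_five, Fin.forall_fin_succ, IsEmpty.forall_iff,
    and_true, Fin.isValue, cons_val, cons_val_zero, cons_val_succ] at hu hv'
  have hzero (x : Fin 5 → ℤ) (h0 : x 0 = 0) (h1 : x 1 = 0) (h2 : x 2 = 0) (h3 : x 3 = 0)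
      (h4 : x 4 = 0) : x = 0 := by
    funext i
    fin_cases i <;> assumption
  rcases (by omega : u 0 = 0 ∨ v 0 = 0) with hu0 | hv0
  · exact .inl (hzero u hu0 (by omega) (by omega) (by omega) (by omega))
  · exact .inr (hzero v hv0 (by omega) (by omega) (by omega) (by omega))

/-- h9 is irreducible in S = ω ∩ ℤ^5: it is not a sum of two nonzero elements of S. -/
theorem stmt_7 :
    ¬ ∃ u v : Fin 5 → ℤ, toR u ∈ ω ∧ toR v ∈ ω ∧ u ≠ 0 ∧ v ≠ 0 ∧ hv 8 = u + v := by
  rintro ⟨u, v, hu, hv', hu0, hv0, h⟩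
  exact (eq_zero_or_eq_zero_of_add_eq_hv_eight (ωDualVectors_dotProduct_nonneg hu)
    (ωDualVectors_dotProduct_nonneg hv') h.symm).elim hu0 hv0
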